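/- Let V and V' be left vector spaces over division rings R and R' with dim V = n ≥ 2 finite, and let g : V → V' be a non-trivial GL-mapping. If x, y ∈ V \ {0} are linearly independent, then g(x) ≠ g(y). -/

import Mathlib

/-!
Since GL(V) acts transitively on linearly independent pairs and commutes with g up to an
automorphism of V', a coincidence g x = g y on one independent pair propagates to every
independent pair. In dimension at least 2 any two nonzero vectors a, b admit a c outside both
lines K a and K b, so g a = g c = g b and g would be constant on V \ {0}.
-/

open Module Submodule

theorem Submodule.exists_notMem_notMem_of_ne_top {R M : Type*} [Ring R] [AddCommGroup M]
    [Module R M] {p q : Submodule R M} (hp : p ≠ ⊤) (hq : q ≠ ⊤) : ∃ x, x ∉ p ∧ x ∉ q := by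
  obtain ⟨y, hyp⟩ : ∃ y, y ∉ p := by simpa [eq_top_iff'] using hp
  obtain ⟨z, hzq⟩ : ∃ z, z ∉ q := by simpa [eq_top_iff'] using hq
  by_cases hyq : y ∈ q
  · by_cases hzp : z ∈ p
    · refine ⟨y + z, fun h ↦ hyp ?_, fun h ↦ hzq ?_⟩
      · exact (p.add_mem_iff_left hzp).1 h
      · exact (q.add_mem_iff_right hyq).1 h
    · exact ⟨z, hzp, hzq⟩
  · exact ⟨y, hyp, hyq⟩

theorem Submodule.span_singleton_ne_top_of_one_lt_finrank {K V : Type*} [DivisionRing K]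
    [AddCommGroup V] [Module K V] (h : 1 < finrank K V) (v : V) : K ∙ v ≠ ⊤ := by
  intro htop
  have hle := finrank_span_le_card (R := K) ({v} : Set V)
  rw [htop, finrank_top, Set.toFinset_singleton, Finset.card_singleton] at hle
  omega

theorem exists_linearIndependent_pair_of_ne_zero {K V : Type*} [DivisionRing K]
    [AddCommGroup V] [Module K V] (h : 1 < finrank K V) {a b : V} (ha : a ≠ 0) (hb : b ≠ 0) :
    ∃ c, LinearIndependent K ![a, c] ∧ LinearIndependent K ![b, c] := by
  obtain ⟨c, hca, hcb⟩ := exists_notMem_notMem_of_ne_top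
    (span_singleton_ne_top_of_one_lt_finrank h a) (span_singleton_ne_top_of_one_lt_finrank h b)
  refine ⟨c, ?_, ?_⟩
  · rw [LinearIndependent.pair_iff' ha]
    exact fun t ht ↦ hca (mem_span_singleton.2 ⟨t, ht⟩)
  · rw [LinearIndependent.pair_iff' hb]
    exact fun t ht ↦ hcb (mem_span_singleton.2 ⟨t, ht⟩)

theorem exists_linearEquiv_apply_eq_of_linearIndependent {K V ι : Type*} [DivisionRing K]
    [AddCommGroup V] [Module K V] [Finite ι] {v w : ι → V}
    (hv : LinearIndependent K v) (hw : LinearIndependent K w) :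
    ∃ u : V ≃ₗ[K] V, ∀ i, u (v i) = w i := by
  have := FiniteDimensional.span_of_finite K (Set.finite_range v)
  obtain ⟨u, hu⟩ :=
    exists_linearEquiv_restrict_eq ((Basis.span hv).equiv (Basis.span hw) (Equiv.refl ι))
  refine ⟨u, fun i ↦ ?_⟩
  have hui := hu (Basis.span hv i)
  rw [Basis.equiv_apply, Equiv.refl_apply, Basis.span_apply, Basis.span_apply] at hui
  exact hui.symm

def IsGLMapping (R R' : Type*) {V V' : Type*} [DivisionRing R] [DivisionRing R']
    [AddCommGroup V] [Module R V] [AddCommGroup V'] [Module R' V'] (g : V → V') : Prop :=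
  ∀ u : V ≃ₗ[R] V, ∃ u' : V' ≃ₗ[R'] V', g ∘ ⇑u = ⇑u' ∘ g

theorem IsGLMapping.apply_eq_apply_of_linearIndependent {R R' V V' : Type*} [DivisionRing R]
    [DivisionRing R'] [AddCommGroup V] [Module R V] [AddCommGroup V'] [Module R' V']
    {g : V → V'} (hg : IsGLMapping R R' g) {x y a b : V} (hxy : LinearIndependent R ![x, y])
    (h : g x = g y) (hab : LinearIndependent R ![a, b]) : g a = g b := by
  obtain ⟨u, hu⟩ := exists_linearEquiv_apply_eq_of_linearIndependent hxy hab
  obtain ⟨u', hu'⟩ := hg u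
  have hu'_apply (i : Fin 2) : g (![a, b] i) = u' (g (![x, y] i)) := by
    rw [← hu i]; exact congrFun hu' _
  calc g a = u' (g x) := hu'_apply 0
    _ = u' (g y) := by rw [h]
    _ = g b := (hu'_apply 1).symm

theorem stmt_5_general {R R' V V' : Type*} [DivisionRing R] [DivisionRing R']
    [AddCommGroup V] [Module R V] [AddCommGroup V'] [Module R' V']
    (n : ℕ) (hn : 2 ≤ n) (hdim : Module.finrank R V = n)
    (g : V → V')
    (hGL : ∀ u : V ≃ₗ[R] V, ∃ u' : V' ≃ₗ[R'] V', g ∘ ⇑u = ⇑u' ∘ g)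
    (hnt : ∃ x y : V, x ≠ 0 ∧ y ≠ 0 ∧ g x ≠ g y)
    (x y : V)
    (hxy : LinearIndependent R ![x, y]) :
    g x ≠ g y := by
  intro h
  obtain ⟨p, q, hp, hq, hpq⟩ := hnt
  obtain ⟨c, hpc, hqc⟩ := exists_linearIndependent_pair_of_ne_zero (K := R) (by omega) hp hq
  have hGL : IsGLMapping R R' g := hGL
  exact hpq <| (hGL.apply_eq_apply_of_linearIndependent hxy h hpc).trans
    (hGL.apply_eq_apply_of_linearIndependent hxy h hqc).symm

/-- **Lemma 2 (Pankov).** A non-trivial GL-mapping takes distinct values on linearly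
independent nonzero vectors. -/
theorem stmt_5 {R R' V V' : Type*} [DivisionRing R] [DivisionRing R']
    [AddCommGroup V] [Module R V] [AddCommGroup V'] [Module R' V']
    (n : ℕ) (hn : 2 ≤ n) [FiniteDimensional R V] (hdim : Module.finrank R V = n)
    (g : V → V')
    (hGL : ∀ u : V ≃ₗ[R] V, ∃ u' : V' ≃ₗ[R'] V', g ∘ ⇑u = ⇑u' ∘ g)
    (hnt : ∃ x y : V, x ≠ 0 ∧ y ≠ 0 ∧ g x ≠ g y)
    (x y : V) (hx : x ≠ 0) (hy : y ≠ 0)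
    (hxy : LinearIndependent R ![x, y]) :
    g x ≠ g y :=
  stmt_5_general n hn hdim g hGL hnt x y hxy
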